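/- Let S ⊆ ℝⁿ be a full-dimensional simplex with vertices v_0, …, v_n and diameter δ = max{‖x − x′‖ : x, x′ ∈ S}, and let φ : ℝⁿ → ℝ be of class C² on a neighborhood of S. Let A ∈ ℝⁿ (a row vector) and a ∈ ℝ be the unique affine interpolant of φ at the vertices, i.e. A·v_i + a = φ(v_i) for all i ∈ {0,…,n}. Then for every x ∈ S, |φ(x) − A·x − a| ≤ (1/2) (max_{y∈S} ρ(H(φ)(y))) δ², where H(φ) denotes the Hessian matrix of φ and ρ(·) the spectral radius. -/

import Mathlib

open Matrix Set

/-- The spectral radius of a real matrix: the largest absolute value of an element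
of its (real) spectrum.  For the (symmetric) Hessian matrices considered here this
is the usual spectral radius. -/
noncomputable def specRad {n : ℕ} (M : Matrix (Fin n) (Fin n) ℝ) : ℝ :=
  sSup ((fun μ => |μ|) '' spectrum ℝ M)

/-- The Hessian matrix of `φ : ℝⁿ → ℝ` at `x`, with entries the second partial
derivatives of `φ`. -/
noncomputable def hessMat {n : ℕ} (φ : EuclideanSpace ℝ (Fin n) → ℝ)
    (x : EuclideanSpace ℝ (Fin n)) : Matrix (Fin n) (Fin n) ℝ :=
  fun i j => iteratedFDeriv ℝ 2 φ x
    ![EuclideanSpace.single i (1 : ℝ), EuclideanSpace.single j (1 : ℝ)]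

/-!
Write `x` as a convex combination `∑ wᵢ vᵢ` of the vertices. Taylor's formula along the
segment from `x` to `vᵢ` gives `|φ(vᵢ) - φ(x) - Dφ(x)(vᵢ - x)| ≤ ρ ‖vᵢ - x‖² / 2 ≤ ρ δ² / 2`,
because the Hessian quadratic form of a symmetric matrix is bounded by its spectral radius,
which is the operator norm. Averaging with the weights `wᵢ`, the first-order terms cancel since
`∑ wᵢ (vᵢ - x) = 0`, and `∑ wᵢ φ(vᵢ) = A·x + a` by interpolation.
-/

open scoped RealInnerProductSpace

section SpectralRadius

variable {n : ℕ} {M : Matrix (Fin n) (Fin n) ℝ}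

lemma abs_le_specRad {μ : ℝ} (hμ : μ ∈ spectrum ℝ M) : |μ| ≤ specRad M :=
  le_csSup ((M.finite_spectrum.image _).bddAbove) ⟨μ, hμ, rfl⟩

lemma specRad_nonneg (M : Matrix (Fin n) (Fin n) ℝ) : 0 ≤ specRad M :=
  Real.sSup_nonneg fun _ ⟨μ, _, hμ⟩ => hμ ▸ abs_nonneg μ

lemma norm_toEuclideanCLM_le_specRad (hM : M.IsHermitian) :
    ‖toEuclideanCLM (𝕜 := ℝ) M‖ ≤ specRad M := by
  have hsa : IsSelfAdjoint (toEuclideanCLM (𝕜 := ℝ) M) := by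
    rw [IsSelfAdjoint, ← map_star, hM.isSelfAdjoint]
  have hrad : spectralRadius ℝ (toEuclideanCLM (𝕜 := ℝ) M) ≤ ENNReal.ofReal (specRad M) := by
    refine iSup₂_le fun μ hμ => ?_
    rw [AlgEquiv.spectrum_eq] at hμ
    rw [← enorm_eq_nnnorm, Real.enorm_eq_ofReal_abs]
    exact ENNReal.ofReal_le_ofReal (abs_le_specRad hμ)
  rw [ContinuousLinearMap.spectralRadius_eq_nnnorm _ hsa, ← enorm_eq_nnnorm, ← ofReal_norm] at hrad
  exact (ENNReal.ofReal_le_ofReal_iff (specRad_nonneg M)).1 hrad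

lemma abs_dotProduct_mulVec_le_specRad (hM : M.IsHermitian) (u : EuclideanSpace ℝ (Fin n)) :
    |u ⬝ᵥ M *ᵥ u| ≤ specRad M * ‖u‖ ^ 2 := by
  rw [← inner_toEuclideanCLM]
  calc |⟪u, toEuclideanCLM (𝕜 := ℝ) M u⟫| ≤ ‖u‖ * ‖toEuclideanCLM (𝕜 := ℝ) M u‖ :=
        abs_real_inner_le_norm _ _
    _ ≤ ‖u‖ * (‖toEuclideanCLM (𝕜 := ℝ) M‖ * ‖u‖) := by
        gcongr; exact ContinuousLinearMap.le_opNorm _ _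
    _ ≤ ‖u‖ * (specRad M * ‖u‖) := by gcongr; exact norm_toEuclideanCLM_le_specRad hM
    _ = specRad M * ‖u‖ ^ 2 := by ring

end SpectralRadius

section Hessian

lemma continuousLinearMap_apply_apply_eq_dotProduct_mulVec {ι : Type*} [Fintype ι]
    [DecidableEq ι] (B : EuclideanSpace ℝ ι →L[ℝ] EuclideanSpace ℝ ι →L[ℝ] ℝ)
    (u v : EuclideanSpace ℝ ι) :
    B u v = u ⬝ᵥ (of fun i j => B (EuclideanSpace.single i 1) (EuclideanSpace.single j 1)) *ᵥ v := by
  have hu : u = ∑ i, u i • EuclideanSpace.single i (1 : ℝ) := by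
    simpa using ((EuclideanSpace.basisFun ι ℝ).sum_repr u).symm
  have hv : v = ∑ i, v i • EuclideanSpace.single i (1 : ℝ) := by
    simpa using ((EuclideanSpace.basisFun ι ℝ).sum_repr v).symm
  conv_lhs => rw [hu, hv]
  simp only [map_sum, map_smul, FunLike.coe_sum, FunLike.coe_smul,
    Finset.sum_apply, Pi.smul_apply, smul_eq_mul, dotProduct, mulVec, of_apply, Finset.mul_sum]
  exact Finset.sum_comm.trans (by simp only [mul_left_comm, mul_comm])

variable {n : ℕ} {φ : EuclideanSpace ℝ (Fin n) → ℝ} {x : EuclideanSpace ℝ (Fin n)}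

lemma hessMat_eq_fderiv_fderiv (φ : EuclideanSpace ℝ (Fin n) → ℝ) (x : EuclideanSpace ℝ (Fin n)) :
    hessMat φ x = of fun i j =>
      fderiv ℝ (fderiv ℝ φ) x (EuclideanSpace.single i 1) (EuclideanSpace.single j 1) := by
  ext i j
  simp [hessMat, iteratedFDeriv_two_apply]

lemma isHermitian_hessMat (hφ : ContDiffAt ℝ 2 φ x) : (hessMat φ x).IsHermitian := by
  have hsymm := hφ.isSymmSndFDerivAt (by simp)
  ext i j
  simp only [hessMat_eq_fderiv_fderiv, conjTranspose_apply, of_apply, star_trivial]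
  exact hsymm _ _

lemma abs_fderiv_fderiv_apply_self_le_specRad_hessMat (hφ : ContDiffAt ℝ 2 φ x)
    (u : EuclideanSpace ℝ (Fin n)) :
    |fderiv ℝ (fderiv ℝ φ) x u u| ≤ specRad (hessMat φ x) * ‖u‖ ^ 2 := by
  rw [continuousLinearMap_apply_apply_eq_dotProduct_mulVec, ← hessMat_eq_fderiv_fderiv]
  exact abs_dotProduct_mulVec_le_specRad (isHermitian_hessMat hφ) u

end Hessian

lemma abs_sub_sub_mul_le_of_abs_deriv_deriv_le {g g' g'' : ℝ → ℝ} {a b C : ℝ} (hab : a ≤ b)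
    (hg : ∀ t ∈ Icc a b, HasDerivAt g (g' t) t) (hg' : ∀ t ∈ Icc a b, HasDerivAt g' (g'' t) t)
    (hC : ∀ t ∈ Icc a b, |g'' t| ≤ C) :
    |g b - g a - g' a * (b - a)| ≤ C / 2 * (b - a) ^ 2 := by
  have hg'_lip : ∀ t ∈ Icc a b, ‖g' t - g' a‖ ≤ C * ‖t - a‖ :=
    fun t ht => (convex_Icc a b).norm_image_sub_le_of_norm_hasDerivWithin_le
      (fun s hs => (hg' s hs).hasDerivWithinAt) hC (left_mem_Icc.2 hab) ht
  refine image_norm_le_of_norm_deriv_right_le_deriv_boundary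
    (f := fun t => g t - g a - g' a * (t - a)) (f' := fun t => g' t - g' a)
    (B := fun t => C / 2 * (t - a) ^ 2) (B' := fun t => C * (t - a)) ?_ ?_ ?_ ?_ ?_
    (right_mem_Icc.2 hab)
  · exact fun t ht => ((hg t ht).continuousAt.sub continuousAt_const).sub
      (continuousAt_const.mul (continuousAt_id.sub continuousAt_const)) |>.continuousWithinAt
  · intro t ht
    have := ((hg t (Ico_subset_Icc_self ht)).sub_const (g a)).sub
      (((hasDerivAt_id t).sub_const a).const_mul (g' a))
    rw [mul_one] at this
    exact this.hasDerivWithinAt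
  · simp
  · exact fun t =>
      ((((hasDerivAt_id' t).sub_const a).pow 2).const_mul (C / 2)).congr_deriv (by ring)
  · intro t ht
    simpa [abs_of_nonneg (sub_nonneg.2 ht.1)] using hg'_lip t (Ico_subset_Icc_self ht)

lemma abs_sub_sub_fderiv_le_of_segment_subset {E : Type*} [NormedAddCommGroup E]
    [NormedSpace ℝ E] {f : E → ℝ} {V : Set E} (hV : IsOpen V) (hf : ContDiffOn ℝ 2 f V)
    {x y : E} (hxy : segment ℝ x y ⊆ V) {K : ℝ}
    (hK : ∀ z ∈ segment ℝ x y, |fderiv ℝ (fderiv ℝ f) z (y - x) (y - x)| ≤ K) :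
    |f y - f x - fderiv ℝ f x (y - x)| ≤ K / 2 := by
  set u := y - x
  have hline : ∀ t ∈ Icc (0 : ℝ) 1, x + t • u ∈ segment ℝ x y := fun t ht =>
    segment_eq_image' ℝ x y ▸ mem_image_of_mem _ ht
  have hnhds : ∀ t ∈ Icc (0 : ℝ) 1, V ∈ nhds (x + t • u) := fun t ht =>
    hV.mem_nhds (hxy (hline t ht))
  have hf' : ContDiffOn ℝ 1 (fderiv ℝ f) V := hf.fderiv_of_isOpen hV (by norm_num)
  have hpath : ∀ t : ℝ, HasDerivAt (fun s : ℝ => x + s • u) u t := fun t => by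
    simpa using ((hasDerivAt_id t).smul_const u).const_add x
  have key := abs_sub_sub_mul_le_of_abs_deriv_deriv_le zero_le_one
    (g := fun t => f (x + t • u)) (g' := fun t => fderiv ℝ f (x + t • u) u)
    (fun t ht => (((hf.differentiableOn two_ne_zero).differentiableAt
      (hnhds t ht)).hasFDerivAt).comp_hasDerivAt t (hpath t))
    (fun t ht => by
      have := (((hf'.differentiableOn one_ne_zero).differentiableAt
        (hnhds t ht)).hasFDerivAt).comp_hasDerivAt t (hpath t)
      exact (this.clm_apply (hasDerivAt_const t u)).congr_deriv (by rw [map_zero, add_zero]))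
    (fun t ht => hK _ (hline t ht))
  simpa [u] using key

lemma abs_sub_sub_le_of_mem_convexHull {E : Type*} [AddCommGroup E] [Module ℝ E]
    {f : E → ℝ} {ℓ L : E →ₗ[ℝ] ℝ} {c K : ℝ} {P : Set E} (hP : ∀ p ∈ P, ℓ p + c = f p)
    {x : E} (hx : x ∈ convexHull ℝ P) (hK : ∀ p ∈ P, |f p - f x - L (p - x)| ≤ K) :
    |f x - ℓ x - c| ≤ K := by
  obtain ⟨ι, _, w, p, hw0, hw1, hpP, rfl⟩ := mem_convexHull_iff_exists_fintype.1 hx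
  set x := ∑ i, w i • p i
  have hℓ : ∑ i, w i * f (p i) = ℓ x + c := by
    simp_rw [← hP _ (hpP _), mul_add, Finset.sum_add_distrib, ← Finset.sum_mul, hw1, one_mul,
      x, map_sum, map_smul, smul_eq_mul]
  have hL : ∑ i, w i * L (p i - x) = 0 := by
    simp_rw [← smul_eq_mul, ← map_smul, ← map_sum, smul_sub, Finset.sum_sub_distrib,
      ← Finset.sum_smul, hw1, one_smul, x, sub_self, map_zero]
  have herr : f x - ℓ x - c = -∑ i, w i * (f (p i) - f x - L (p i - x)) := by
    simp_rw [mul_sub, Finset.sum_sub_distrib, ← Finset.sum_mul, hw1, hℓ, hL]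
    ring
  calc |f x - ℓ x - c| ≤ ∑ i, w i * |f (p i) - f x - L (p i - x)| := by
        rw [herr, abs_neg]
        refine (Finset.abs_sum_le_sum_abs _ _).trans_eq (Finset.sum_congr rfl fun i _ => ?_)
        rw [abs_mul, abs_of_nonneg (hw0 i)]
    _ ≤ ∑ i, w i * K := by gcongr with i; exacts [hw0 i, hK _ (hpP i)]
    _ = K := by rw [← Finset.sum_mul, hw1, one_mul]

theorem affine_interpolation_error_general
    (n : ℕ) (v : Fin (n + 1) → EuclideanSpace ℝ (Fin n))
    (S : Set (EuclideanSpace ℝ (Fin n)))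
    (hS : S = convexHull ℝ (Set.range v))
    (δ : ℝ) (hδ : IsGreatest {d : ℝ | ∃ x ∈ S, ∃ y ∈ S, d = ‖x - y‖} δ)
    (V : Set (EuclideanSpace ℝ (Fin n))) (hVopen : IsOpen V) (hSV : S ⊆ V)
    (φ : EuclideanSpace ℝ (Fin n) → ℝ) (hφ : ContDiffOn ℝ 2 φ V)
    (A : EuclideanSpace ℝ (Fin n)) (a : ℝ)
    (hinterp : ∀ i, A ⬝ᵥ v i + a = φ (v i))
    (ρmax : ℝ)
    (hρ : IsGreatest ((fun y => specRad (hessMat φ y)) '' S) ρmax)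
    (x : EuclideanSpace ℝ (Fin n)) (hx : x ∈ S) :
    |φ x - A ⬝ᵥ x - a| ≤ (1 / 2) * ρmax * δ ^ 2 := by
  have hvS : range v ⊆ S := hS ▸ subset_convexHull ℝ _
  have hρ0 : 0 ≤ ρmax := by
    obtain ⟨y, -, hy⟩ := hρ.1
    exact hy ▸ specRad_nonneg _
  let ℓ := dotProductBilin ℝ ℝ (A : Fin n → ℝ) ∘ₗ (WithLp.linearEquiv 2 ℝ (Fin n → ℝ)).toLinearMap
  refine (abs_sub_sub_le_of_mem_convexHull (ℓ := ℓ) (L := (fderiv ℝ φ x).toLinearMap)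
    (forall_mem_range.2 hinterp) (hS ▸ hx) (forall_mem_range.2 fun i => ?_)).trans_eq
    (by ring : ρmax * δ ^ 2 / 2 = _)
  have hseg : segment ℝ x (v i) ⊆ S :=
    (hS ▸ convex_convexHull ℝ _ : Convex ℝ S).segment_subset hx (hvS (mem_range_self i))
  refine abs_sub_sub_fderiv_le_of_segment_subset hVopen hφ (hseg.trans hSV) fun z hz => ?_
  have hzV : V ∈ nhds z := hVopen.mem_nhds (hSV (hseg hz))
  calc |fderiv ℝ (fderiv ℝ φ) z (v i - x) (v i - x)|
      ≤ specRad (hessMat φ z) * ‖v i - x‖ ^ 2 :=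
        abs_fderiv_fderiv_apply_self_le_specRad_hessMat ((hφ z (hSV (hseg hz))).contDiffAt hzV) _
    _ ≤ ρmax * δ ^ 2 := by
        gcongr
        · exact hρ.2 ⟨z, hseg hz, rfl⟩
        · exact hδ.2 ⟨v i, hvS (mem_range_self i), x, hx, rfl⟩

/-- interpolation error bound, used in Proposition 1 of the paper.
If `x ↦ A·x + a` is the affine interpolant of a `C²` function `φ` at the vertices of a
full-dimensional simplex `S` of diameter `δ`, then for every `x ∈ S`,
`|φ(x) − A·x − a| ≤ (1/2) (max_{y∈S} ρ(H(φ)(y))) δ²`. -/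
theorem affine_interpolation_error
    (n : ℕ) (v : Fin (n + 1) → EuclideanSpace ℝ (Fin n))
    (hv : AffineIndependent ℝ v)
    (S : Set (EuclideanSpace ℝ (Fin n)))
    (hS : S = convexHull ℝ (Set.range v))
    (δ : ℝ) (hδ : IsGreatest {d : ℝ | ∃ x ∈ S, ∃ y ∈ S, d = ‖x - y‖} δ)
    (V : Set (EuclideanSpace ℝ (Fin n))) (hVopen : IsOpen V) (hSV : S ⊆ V)
    (φ : EuclideanSpace ℝ (Fin n) → ℝ) (hφ : ContDiffOn ℝ 2 φ V)
    (A : EuclideanSpace ℝ (Fin n)) (a : ℝ)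
    (hinterp : ∀ i, A ⬝ᵥ v i + a = φ (v i))
    (ρmax : ℝ)
    (hρ : IsGreatest ((fun y => specRad (hessMat φ y)) '' S) ρmax)
    (x : EuclideanSpace ℝ (Fin n)) (hx : x ∈ S) :
    |φ x - A ⬝ᵥ x - a| ≤ (1 / 2) * ρmax * δ ^ 2 :=
  affine_interpolation_error_general n v S hS δ hδ V hVopen hSV φ hφ A a hinterp ρmax hρ x hx
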